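/- Discrepancy lemma: let Φ be a finite unit flow from A to B with associated Markov chain Y, and define the measure Φ̃ on Ω×Ω by ∫ f dΦ̃ = E^Φ[ Σ_{n≥1} f(Y_{n−1},Y_n) 1{τ_B^Y ≥ n} ] for bounded measurable f≥0, and Ψ = Φ − Φ̃. Then Φ̃ is a unit flow from A to B, Ψ is a nonnegative measure, and Ψ satisfies Kirchhoff's law on all of Ω: Ψ(C×Ω) = Ψ(Ω×C) for every measurable C⊂Ω. -/

import Mathlib

open MeasureTheory ProbabilityTheory ENNReal Set Filter
open scoped Classical

noncomputable section

variable {Ω : Type*}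

/-- The Dirichlet form `E(h) = (1/2) ∫ (h(y)-h(x))² K(dx,dy)` (in `ℝ≥0∞`). -/
def dirichletForm [MeasurableSpace Ω] (K : Measure (Ω × Ω)) (h : Ω → ℝ) : ℝ≥0∞ :=
  2⁻¹ * ∫⁻ p, ENNReal.ofReal ((h p.2 - h p.1) ^ 2) ∂K

/-- The class `V_AB` of test potentials. -/
def VAB [MeasurableSpace Ω] (A B : Set Ω) (K : Measure (Ω × Ω)) : Set (Ω → ℝ) :=
  {h | Measurable h ∧ (∀ x ∈ A, h x = 1) ∧ (∀ x ∈ B, h x = 0) ∧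
    (∀ x, 0 ≤ h x ∧ h x ≤ 1) ∧ dirichletForm K h < ⊤}

/-- The capacity `Cap(A,B)`, defined by the Dirichlet principle. -/
def Cap [MeasurableSpace Ω] (A B : Set Ω) (K : Measure (Ω × Ω)) : ℝ≥0∞ :=
  ⨅ h ∈ VAB A B K, dirichletForm K h

/-- Finite paths `(γ₀, …, γ_{n+1})` with at least one edge. -/
abbrev PathSpace (Ω : Type*) := Σ n : ℕ, Fin (n + 2) → Ω

/-- The set `Γ_AB` of finite paths from `A` to `B` not touching `B` before the end. -/
def GammaAB (A B : Set Ω) : Set (PathSpace Ω) :=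
  {γ | γ.2 0 ∈ A ∧ γ.2 (Fin.last (γ.1 + 1)) ∈ B ∧
    ∀ i : Fin (γ.1 + 2), 0 < (i : ℕ) → (i : ℕ) < γ.1 + 1 → γ.2 i ∉ B}

/-- Sum of `g` over the (directed) edges of the path `γ`. -/
def pathSum (g : Ω × Ω → ℝ≥0∞) (γ : PathSpace Ω) : ℝ≥0∞ :=
  ∑ j : Fin (γ.1 + 1), g (γ.2 j.castSucc, γ.2 j.succ)

/-- `Φ` is the edge measure `Φ_P` of the path measure `P`. -/
def IsEdgeMeasure [MeasurableSpace Ω] (P : Measure (PathSpace Ω)) (Φ : Measure (Ω × Ω)) : Prop :=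
  ∀ g : Ω × Ω → ℝ≥0∞, Measurable g → ∫⁻ p, g p ∂Φ = ∫⁻ γ, pathSum g γ ∂P

/-- `Φ` is a unit flow from `A` to `B`. -/
def IsUnitFlow [MeasurableSpace Ω] (A B : Set Ω) (Φ : Measure (Ω × Ω)) : Prop :=
  SigmaFinite Φ ∧
  Φ (A ×ˢ univ) = 1 ∧ Φ (univ ×ˢ A) = 0 ∧
  Φ (univ ×ˢ B) = 1 ∧ Φ (B ×ˢ univ) = 0 ∧
  (∀ C : Set Ω, MeasurableSet C → C ⊆ (A ∪ B)ᶜ → Φ (C ×ˢ univ) = Φ (univ ×ˢ C)) ∧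
  ∃ χ : Set (Ω × Ω), MeasurableSet χ ∧ Φ χᶜ = 0 ∧ ∀ x y : Ω, (x, y) ∈ χ → (y, x) ∉ χ

/-- `χ` contains no loops. -/
def NoLoops (χ : Set (Ω × Ω)) : Prop :=
  ∀ (n : ℕ) (γ : Fin (n + 2) → Ω), γ (Fin.last (n + 1)) = γ 0 →
    ∃ j : Fin (n + 1), (γ j.castSucc, γ j.succ) ∉ χ

/-- `Φ` is a loop-free unit flow from `A` to `B`. -/
def IsLoopFreeUnitFlow [MeasurableSpace Ω] (A B : Set Ω) (Φ : Measure (Ω × Ω)) : Prop :=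
  IsUnitFlow A B Φ ∧
  ∃ χ : Set (Ω × Ω), MeasurableSet χ ∧ Φ χᶜ = 0 ∧
    (∀ x y : Ω, (x, y) ∈ χ → (y, x) ∉ χ) ∧ NoLoops χ

/-- `Φ(dx,dy) = ν(dx) ℓ(x,dy)` with `ν = Φ.fst` the left marginal. -/
def Disintegrates [MeasurableSpace Ω] (Φ : Measure (Ω × Ω)) (ℓ : Kernel Ω Ω) : Prop :=
  ∀ g : Ω × Ω → ℝ≥0∞, Measurable g →
    ∫⁻ p, g p ∂Φ = ∫⁻ x, ∫⁻ y, g (x, y) ∂(ℓ x) ∂Φ.fst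

/-- Finite-dimensional distributions of the Markov chain with initial law `μ0` and kernel `ℓ`. -/
def fdd [MeasurableSpace Ω] (μ0 : Measure Ω) (ℓ : Kernel Ω Ω) :
    (n : ℕ) → Measure (Fin (n + 1) → Ω)
  | 0 => μ0.map (fun x => fun _ => x)
  | n + 1 => (fdd μ0 ℓ n).bind (fun p => (ℓ (p (Fin.last n))).map (Fin.snoc p))

/-- `P` is the law of the Markov chain with initial law `μ0` and transition kernel `ℓ`. -/
def IsChainLaw [MeasurableSpace Ω] (μ0 : Measure Ω) (ℓ : Kernel Ω Ω)
    (P : Measure (ℕ → Ω)) : Prop :=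
  IsProbabilityMeasure P ∧
  ∀ n : ℕ, P.map (fun ω (i : Fin (n + 1)) => ω (i : ℕ)) = fdd μ0 ℓ n

/-- `Σ_{n=1}^{τ_B} g(Y_{n-1}, Y_n)`, where `τ_B = min{n ≥ 1 : Y_n ∈ B}`. -/
def stoppedSum (B : Set Ω) (g : Ω × Ω → ℝ≥0∞) (ω : ℕ → Ω) : ℝ≥0∞ :=
  ∑' n : ℕ, if ∀ m, 1 ≤ m → m ≤ n → ω m ∉ B then g (ω n, ω (n + 1)) else 0

/-- The event `τ_B < ∞`. -/
def HitsB (B : Set Ω) (ω : ℕ → Ω) : Prop := ∃ n : ℕ, 1 ≤ n ∧ ω n ∈ B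

/-- `τ_B`, viewed in `ℝ≥0∞`. -/
def hitTimeE (B : Set Ω) (ω : ℕ → Ω) : ℝ≥0∞ :=
  ∑' n : ℕ, if ∀ m, 1 ≤ m → m ≤ n → ω m ∉ B then 1 else 0

/-- The Berman-Konsowa functional `E^Φ[ (Σ_{n=1}^{τ_B} g(Y_{n-1},Y_n))⁻¹ ]`, with the
reciprocal taken to be `0` on `{τ_B = ∞}` (and automatically `0` when the sum is infinite). -/
def bkValue [MeasurableSpace Ω] (B : Set Ω) (g : Ω × Ω → ℝ≥0∞)
    (P : Measure (ℕ → Ω)) : ℝ≥0∞ :=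
  ∫⁻ ω, (if HitsB B ω then (stoppedSum B g ω)⁻¹ else 0) ∂P

end

/-!
Write `ν` for the left marginal of `Φ`, so that `Φ = ν ⊗ ℓ`. The flow axioms say that `ν` solves
`ν = ν|_A + (ℓ ∘ ν)|_{Bᶜ}`. On the other hand `Φ̃ = ρ ⊗ ℓ`, where `ρ = ∑ₙ P(Yₙ ∈ ·, τ_B > n)` is
the occupation measure of the chain before `τ_B`; `ρ` is the least measure with
`ρ ≥ ν|_A + (ℓ ∘ ρ)|_{Bᶜ}`, hence `ρ ≤ ν`. Subtracting the two equations, `δ = ν - ρ` satisfies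
`δ = (ℓ ∘ δ)|_{Bᶜ}`; as `ℓ` is Markov and `δ` finite, no mass can be lost in `B`, so `ℓ ∘ δ = δ`.
Then `Ψ = δ ⊗ ℓ` has both marginals equal to `δ`, and the flow properties of `ρ ⊗ ℓ` follow from
`ρ ≤ ν` and `ℓ ∘ ν = ℓ ∘ ρ + δ`.
-/

section OccupationMeasure

variable {Ω : Type*} [MeasurableSpace Ω]

lemma comp_le_comp_of_le {α β : Type*} [MeasurableSpace α] [MeasurableSpace β]
    (κ : Kernel α β) {μ ν : Measure α} (h : μ ≤ ν) : κ ∘ₘ μ ≤ κ ∘ₘ ν :=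
  Measure.le_iff.2 fun s hs => by
    simp only [Measure.bind_apply hs κ.aemeasurable]
    exact lintegral_mono' h le_rfl

/-- `killedLaw B ℓ μ0 n` is the law of `Y_n` on the event `{τ_B > n}`, for the chain `Y` with
initial law `μ0` and kernel `ℓ`. -/
noncomputable def killedLaw (B : Set Ω) (ℓ : Kernel Ω Ω) (μ0 : Measure Ω) : ℕ → Measure Ω
  | 0 => μ0
  | n + 1 => (ℓ ∘ₘ killedLaw B ℓ μ0 n).restrict Bᶜ

noncomputable def occupationMeasure (B : Set Ω) (ℓ : Kernel Ω Ω) (μ0 : Measure Ω) : Measure Ω :=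
  Measure.sum (killedLaw B ℓ μ0)

variable {B : Set Ω} {ℓ : Kernel Ω Ω} {μ0 ν : Measure Ω}

lemma occupationMeasure_eq_add_comp :
    occupationMeasure B ℓ μ0 = μ0 + (ℓ ∘ₘ occupationMeasure B ℓ μ0).restrict Bᶜ := by
  ext s hs
  rw [occupationMeasure, Measure.bind_sum _ _ ℓ.aemeasurable, Measure.restrict_sum_of_countable,
    Measure.add_apply, Measure.sum_apply _ hs, Measure.sum_apply _ hs,
    tsum_eq_zero_add' ENNReal.summable]
  rfl

lemma sum_range_killedLaw_succ (N : ℕ) :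
    ∑ n ∈ Finset.range (N + 1), killedLaw B ℓ μ0 n
      = μ0 + (ℓ ∘ₘ ∑ n ∈ Finset.range N, killedLaw B ℓ μ0 n).restrict Bᶜ := by
  induction N with
  | zero => simp [killedLaw]
  | succ N ih =>
    conv_lhs => rw [Finset.sum_range_succ, ih]
    rw [Finset.sum_range_succ, Measure.comp_add, Measure.restrict_add, add_assoc]
    rfl

lemma occupationMeasure_le (hν : μ0 + (ℓ ∘ₘ ν).restrict Bᶜ ≤ ν) :
    occupationMeasure B ℓ μ0 ≤ ν := by
  have partial_sum_le (N : ℕ) : ∑ n ∈ Finset.range N, killedLaw B ℓ μ0 n ≤ ν := by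
    induction N with
    | zero => simpa using Measure.zero_le ν
    | succ N ih =>
      rw [sum_range_killedLaw_succ]
      exact le_trans (add_le_add le_rfl (Measure.restrict_mono le_rfl (comp_le_comp_of_le ℓ ih))) hν
  refine Measure.le_iff.2 fun s hs => ?_
  rw [occupationMeasure, Measure.sum_apply _ hs, ENNReal.tsum_eq_iSup_nat]
  exact iSup_le fun N => by
    rw [← Measure.finsetSum_apply]
    exact Measure.le_iff.1 (partial_sum_le N) s hs

lemma comp_eq_self_of_eq_restrict_comp [IsMarkovKernel ℓ] {δ : Measure Ω} [IsFiniteMeasure δ]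
    (hB : MeasurableSet B) (h : δ = (ℓ ∘ₘ δ).restrict Bᶜ) : ℓ ∘ₘ δ = δ := by
  have hmass : (ℓ ∘ₘ δ) Bᶜ = (ℓ ∘ₘ δ) univ := by
    conv_rhs => rw [Measure.comp_apply_univ, h]
    rw [Measure.restrict_apply_univ]
  have hnull : (ℓ ∘ₘ δ) B = 0 := by
    rw [← measure_add_measure_compl hB] at hmass
    exact (ENNReal.add_left_inj (measure_ne_top _ Bᶜ)).1 (hmass.symm.trans (zero_add _).symm)
  conv_rhs => rw [h]
  exact (Measure.restrict_eq_self_of_ae_mem (measure_eq_zero_iff_ae_notMem.1 hnull)).symm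

lemma comp_sub_occupationMeasure [IsMarkovKernel ℓ] [IsFiniteMeasure ν] (hB : MeasurableSet B)
    (hν : ν = μ0 + (ℓ ∘ₘ ν).restrict Bᶜ) :
    ℓ ∘ₘ (ν - occupationMeasure B ℓ μ0) = ν - occupationMeasure B ℓ μ0 := by
  have hρ := occupationMeasure_eq_add_comp (B := B) (ℓ := ℓ) (μ0 := μ0)
  set ρ := occupationMeasure B ℓ μ0
  have hρν : ρ ≤ ν := occupationMeasure_le hν.ge
  have : IsFiniteMeasure ρ := isFiniteMeasure_of_le ν hρν
  refine comp_eq_self_of_eq_restrict_comp hB ?_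
  have hsplit : ν - ρ + ρ = (ℓ ∘ₘ (ν - ρ)).restrict Bᶜ + ρ :=
    calc ν - ρ + ρ = μ0 + (ℓ ∘ₘ (ν - ρ + ρ)).restrict Bᶜ := by
          rw [Measure.sub_add_cancel_of_le hρν]; exact hν
      _ = (ℓ ∘ₘ (ν - ρ)).restrict Bᶜ + (μ0 + (ℓ ∘ₘ ρ).restrict Bᶜ) := by
          rw [Measure.comp_add, Measure.restrict_add]; abel
      _ = (ℓ ∘ₘ (ν - ρ)).restrict Bᶜ + ρ := by rw [← hρ]
  calc ν - ρ = ν - ρ + ρ - ρ := Measure.add_sub_cancel.symm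
    _ = (ℓ ∘ₘ (ν - ρ)).restrict Bᶜ := by rw [hsplit, Measure.add_sub_cancel]

end OccupationMeasure

section ChainPaths

variable {Ω : Type*} {B : Set Ω}

def AvoidsUntil (B : Set Ω) (n : ℕ) {k : ℕ} (p : Fin k → Ω) : Prop :=
  ∀ m : Fin k, 1 ≤ (m : ℕ) → (m : ℕ) ≤ n → p m ∉ B

lemma avoidsUntil_snoc {n m : ℕ} (hm : n ≤ m) (p : Fin (n + 1) → Ω) (y : Ω) :
    AvoidsUntil B m (Fin.snoc p y : Fin (n + 2) → Ω) ↔ AvoidsUntil B n p ∧ (n + 1 ≤ m → y ∉ B) := by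
  rw [AvoidsUntil, Fin.forall_fin_succ']
  simp only [Fin.snoc_castSucc, Fin.snoc_last, Fin.val_castSucc, Fin.val_last]
  refine and_congr (forall_congr' fun i => ?_) (by simp)
  have := i.isLt
  exact ⟨fun h h1 _ => h h1 (by omega), fun h h1 _ => h h1 (by omega)⟩

lemma avoidsUntil_zero {k : ℕ} (p : Fin k → Ω) : AvoidsUntil B 0 p :=
  fun _ h1 h2 => absurd h1 (by omega)

lemma avoidsUntil_prefix_iff (n : ℕ) (ω : ℕ → Ω) :
    AvoidsUntil B n (fun i : Fin (n + 2) => ω i) ↔ ∀ m, 1 ≤ m → m ≤ n → ω m ∉ B :=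
  ⟨fun h m h1 h2 => h ⟨m, by omega⟩ h1 h2, fun h m h1 h2 => h m h1 h2⟩

variable [MeasurableSpace Ω]

lemma measurableSet_avoidsUntil (hB : MeasurableSet B) (n k : ℕ) :
    MeasurableSet {p : Fin k → Ω | AvoidsUntil B n p} := by
  simp only [AvoidsUntil, Set.ofPred_forall]
  exact .iInter fun m => .iInter fun _ => .iInter fun _ => hB.compl.preimage (measurable_pi_apply m)

lemma measurable_snoc (n : ℕ) :
    Measurable fun q : (Fin (n + 1) → Ω) × Ω => (Fin.snoc q.1 q.2 : Fin (n + 2) → Ω) := by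
  refine measurable_pi_lambda _ fun i => ?_
  induction i using Fin.lastCases with
  | last => simpa only [Fin.snoc_last] using measurable_snd
  | cast j =>
    simp only [Fin.snoc_castSucc]
    exact (measurable_pi_apply j).comp measurable_fst

variable {ℓ : Kernel Ω Ω} [IsSFiniteKernel ℓ] {μ0 : Measure Ω}

lemma measurable_fdd_step (n : ℕ) :
    Measurable fun p : Fin (n + 1) → Ω =>
      ((ℓ (p (Fin.last n))).map (Fin.snoc p) : Measure (Fin (n + 2) → Ω)) := by
  refine Measure.measurable_of_measurable_coe _ fun s hs => ?_
  set snocPair := fun q : (Fin (n + 1) → Ω) × Ω => (Fin.snoc q.1 q.2 : Fin (n + 2) → Ω)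
  have key : ∀ p : Fin (n + 1) → Ω,
      ((ℓ (p (Fin.last n))).map (Fin.snoc p) : Measure (Fin (n + 2) → Ω)) s
        = ℓ.comap (· (Fin.last n)) (measurable_pi_apply _) p (Prod.mk p ⁻¹' (snocPair ⁻¹' s)) :=
    fun p => Measure.map_apply ((measurable_snoc n).comp measurable_prodMk_left) hs
  simp_rw [key]
  exact Kernel.measurable_kernel_prodMk_left (measurable_snoc n hs)

lemma lintegral_fdd_succ {n : ℕ} {F : (Fin (n + 2) → Ω) → ℝ≥0∞} (hF : Measurable F) :
    ∫⁻ q, F q ∂(fdd μ0 ℓ (n + 1))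
      = ∫⁻ p, ∫⁻ y, F (Fin.snoc p y) ∂(ℓ (p (Fin.last n))) ∂(fdd μ0 ℓ n) := by
  rw [fdd, Measure.lintegral_bind (measurable_fdd_step n).aemeasurable hF.aemeasurable]
  exact lintegral_congr fun p => lintegral_map hF ((measurable_snoc n).comp measurable_prodMk_left)

lemma lintegral_fdd_avoidsUntil (hB : MeasurableSet B) (n : ℕ) {f : Ω → ℝ≥0∞}
    (hf : Measurable f) :
    ∫⁻ p, (if AvoidsUntil B n p then f (p (Fin.last n)) else 0) ∂(fdd μ0 ℓ n)
      = ∫⁻ x, f x ∂(killedLaw B ℓ μ0 n) := by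
  induction n generalizing f with
  | zero =>
    simp only [fdd, killedLaw, avoidsUntil_zero, if_true]
    exact lintegral_map (hf.comp (measurable_pi_apply _))
      (measurable_pi_lambda _ fun _ => measurable_id)
  | succ n ih =>
    have inner : ∀ p : Fin (n + 1) → Ω,
        ∫⁻ y, (if AvoidsUntil B (n + 1) (Fin.snoc p y : Fin (n + 2) → Ω)
          then f ((Fin.snoc p y : Fin (n + 2) → Ω) (Fin.last (n + 1))) else 0) ∂(ℓ (p (Fin.last n)))
        = if AvoidsUntil B n p then ∫⁻ y, Bᶜ.indicator f y ∂(ℓ (p (Fin.last n))) else 0 := by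
      intro p
      by_cases hp : AvoidsUntil B n p <;>
        simp [avoidsUntil_snoc (Nat.le_succ n), hp, Set.indicator_apply]
    have hF : Measurable fun q : Fin (n + 2) → Ω =>
        if AvoidsUntil B (n + 1) q then f (q (Fin.last (n + 1))) else 0 :=
      (hf.comp (measurable_pi_apply _)).ite (measurableSet_avoidsUntil hB _ _) measurable_const
    rw [lintegral_fdd_succ hF, lintegral_congr inner,
      ih (f := fun x => ∫⁻ y, Bᶜ.indicator f y ∂(ℓ x)) (hf.indicator hB.compl).lintegral_kernel,
      killedLaw, ← lintegral_indicator hB.compl,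
      Measure.lintegral_bind ℓ.aemeasurable (hf.indicator hB.compl).aemeasurable]

lemma lintegral_fdd_avoidsUntil_edge (hB : MeasurableSet B) (n : ℕ) {g : Ω × Ω → ℝ≥0∞}
    (hg : Measurable g) :
    ∫⁻ q, (if AvoidsUntil B n q then g (q (Fin.last n).castSucc, q (Fin.last (n + 1))) else 0)
        ∂(fdd μ0 ℓ (n + 1))
      = ∫⁻ x, ∫⁻ y, g (x, y) ∂(ℓ x) ∂(killedLaw B ℓ μ0 n) := by
  have hF : Measurable fun q : Fin (n + 2) → Ω =>
      if AvoidsUntil B n q then g (q (Fin.last n).castSucc, q (Fin.last (n + 1))) else 0 :=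
    (hg.comp ((measurable_pi_apply _).prodMk (measurable_pi_apply _))).ite
      (measurableSet_avoidsUntil hB _ _) measurable_const
  have inner : ∀ p : Fin (n + 1) → Ω,
      ∫⁻ y, (if AvoidsUntil B n (Fin.snoc p y : Fin (n + 2) → Ω) then
          g ((Fin.snoc p y : Fin (n + 2) → Ω) (Fin.last n).castSucc,
            (Fin.snoc p y : Fin (n + 2) → Ω) (Fin.last (n + 1))) else 0) ∂(ℓ (p (Fin.last n)))
        = if AvoidsUntil B n p then ∫⁻ y, g (p (Fin.last n), y) ∂(ℓ (p (Fin.last n))) else 0 := by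
    intro p
    by_cases hp : AvoidsUntil B n p <;> simp [avoidsUntil_snoc le_rfl, hp]
  rw [lintegral_fdd_succ hF, lintegral_congr inner,
    lintegral_fdd_avoidsUntil hB n (f := fun x => ∫⁻ y, g (x, y) ∂(ℓ x))
      hg.lintegral_kernel_prod_right']

lemma lintegral_stoppedSum (hB : MeasurableSet B) {P : Measure (ℕ → Ω)} (hP : IsChainLaw μ0 ℓ P)
    {g : Ω × Ω → ℝ≥0∞} (hg : Measurable g) :
    ∫⁻ ω, stoppedSum B g ω ∂P = ∫⁻ x, ∫⁻ y, g (x, y) ∂(ℓ x) ∂(occupationMeasure B ℓ μ0) := by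
  set F : (n : ℕ) → (Fin (n + 2) → Ω) → ℝ≥0∞ := fun n q =>
    if AvoidsUntil B n q then g (q (Fin.last n).castSucc, q (Fin.last (n + 1))) else 0
  have hF (n : ℕ) : Measurable (F n) :=
    (hg.comp ((measurable_pi_apply _).prodMk (measurable_pi_apply _))).ite
      (measurableSet_avoidsUntil hB _ _) measurable_const
  have hproj (n : ℕ) : Measurable fun ω : ℕ → Ω => fun i : Fin (n + 2) => ω i :=
    measurable_pi_lambda _ fun i => measurable_pi_apply _
  have hterm (ω : ℕ → Ω) : stoppedSum B g ω = ∑' n, F n fun i : Fin (n + 2) => ω i :=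
    tsum_congr fun n => by
      simp only [F, avoidsUntil_prefix_iff, Fin.val_castSucc, Fin.val_last]
      congr -- the two `if`s differ only in their `Decidable` instances
  calc ∫⁻ ω, stoppedSum B g ω ∂P
      = ∫⁻ ω, ∑' n, F n (fun i : Fin (n + 2) => ω i) ∂P := lintegral_congr hterm
    _ = ∑' n, ∫⁻ ω, F n (fun i : Fin (n + 2) => ω i) ∂P :=
        lintegral_tsum fun n => ((hF n).comp (hproj n)).aemeasurable
    _ = ∑' n, ∫⁻ x, ∫⁻ y, g (x, y) ∂(ℓ x) ∂(killedLaw B ℓ μ0 n) := by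
        refine tsum_congr fun n => ?_
        rw [← lintegral_map (hF n) (hproj n), hP.2 (n + 1)]
        exact lintegral_fdd_avoidsUntil_edge hB n hg
    _ = ∫⁻ x, ∫⁻ y, g (x, y) ∂(ℓ x) ∂(occupationMeasure B ℓ μ0) :=
        (lintegral_sum_measure _ _).symm

end ChainPaths

section UnitFlow

variable {α β : Type*} [MeasurableSpace α] [MeasurableSpace β] {μ : Measure α} [SFinite μ]
  {κ : Kernel α β}

lemma compProd_prod_univ [IsMarkovKernel κ] {C : Set α} (hC : MeasurableSet C) :
    (μ ⊗ₘ κ) (C ×ˢ univ) = μ C := by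
  simp [Measure.compProd_apply_prod hC .univ]

lemma compProd_univ_prod [IsSFiniteKernel κ] {C : Set β} (hC : MeasurableSet C) :
    (μ ⊗ₘ κ) (univ ×ˢ C) = (κ ∘ₘ μ) C := by
  rw [Measure.compProd_apply_prod .univ hC, Measure.bind_apply hC κ.aemeasurable,
    Measure.restrict_univ]

lemma Disintegrates.eq_compProd {Φ : Measure (α × α)} [SFinite Φ] {ℓ : Kernel α α}
    [IsSFiniteKernel ℓ] (h : Disintegrates Φ ℓ) : Φ = Φ.fst ⊗ₘ ℓ :=
  Measure.ext_of_lintegral _ fun g hg => by rw [h g hg, Measure.lintegral_compProd hg]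

variable {Ω : Type*} [MeasurableSpace Ω] {A B : Set Ω} {ℓ : Kernel Ω Ω} [IsMarkovKernel ℓ]
  {ν : Measure Ω} [IsFiniteMeasure ν]

lemma isUnitFlow_compProd_iff (hA : MeasurableSet A) (hB : MeasurableSet B) :
    IsUnitFlow A B (ν ⊗ₘ ℓ) ↔
      ν A = 1 ∧ (ℓ ∘ₘ ν) A = 0 ∧ (ℓ ∘ₘ ν) B = 1 ∧ ν B = 0 ∧
      (∀ C : Set Ω, MeasurableSet C → C ⊆ (A ∪ B)ᶜ → ν C = (ℓ ∘ₘ ν) C) ∧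
      ∃ χ : Set (Ω × Ω), MeasurableSet χ ∧ (ν ⊗ₘ ℓ) χᶜ = 0 ∧
        ∀ x y : Ω, (x, y) ∈ χ → (y, x) ∉ χ := by
  have kirchhoff_iff : (∀ C : Set Ω, MeasurableSet C → C ⊆ (A ∪ B)ᶜ →
      (ν ⊗ₘ ℓ) (C ×ˢ univ) = (ν ⊗ₘ ℓ) (univ ×ˢ C)) ↔
      ∀ C : Set Ω, MeasurableSet C → C ⊆ (A ∪ B)ᶜ → ν C = (ℓ ∘ₘ ν) C :=
    forall_congr' fun C => imp_congr_right fun hC => by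
      rw [compProd_prod_univ hC, compProd_univ_prod hC]
  simp only [IsUnitFlow, compProd_prod_univ hA, compProd_prod_univ hB, compProd_univ_prod hA,
    compProd_univ_prod hB, kirchhoff_iff]
  exact ⟨fun h => h.2, fun h => ⟨inferInstance, h⟩⟩

namespace IsUnitFlow

lemma eq_restrict_add_restrict_comp (hA : MeasurableSet A) (hB : MeasurableSet B)
    (h : IsUnitFlow A B (ν ⊗ₘ ℓ)) :
    ν = ν.restrict A + (ℓ ∘ₘ ν).restrict Bᶜ := by
  obtain ⟨-, hℓA, -, hνB, hKir, -⟩ := (isUnitFlow_compProd_iff hA hB).1 h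
  ext C hC
  have hCAB : MeasurableSet ((C \ A) \ B) := (hC.diff hA).diff hB
  rw [Measure.add_apply, Measure.restrict_apply hC, Measure.restrict_apply hC,
    ← measure_inter_add_sdiff C hA, ← measure_sdiff_null (s := C \ A) hνB,
    hKir _ hCAB fun x hx => by simp_all, ← measure_sdiff_null (s := C ∩ Bᶜ) hℓA]
  congr 2
  ext x
  simp only [Set.mem_sdiff, mem_inter_iff, mem_compl_iff]
  tauto

lemma occupationMeasure_le (hA : MeasurableSet A) (hB : MeasurableSet B)
    (h : IsUnitFlow A B (ν ⊗ₘ ℓ)) :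
    occupationMeasure B ℓ (ν.restrict A) ≤ ν :=
  _root_.occupationMeasure_le (h.eq_restrict_add_restrict_comp hA hB).ge

lemma comp_sub_occupationMeasure (hA : MeasurableSet A) (hB : MeasurableSet B)
    (h : IsUnitFlow A B (ν ⊗ₘ ℓ)) :
    ℓ ∘ₘ (ν - occupationMeasure B ℓ (ν.restrict A)) = ν - occupationMeasure B ℓ (ν.restrict A) :=
  _root_.comp_sub_occupationMeasure hB (h.eq_restrict_add_restrict_comp hA hB)

theorem occupationMeasure_compProd (hA : MeasurableSet A) (hB : MeasurableSet B)
    (h : IsUnitFlow A B (ν ⊗ₘ ℓ)) :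
    IsUnitFlow A B (occupationMeasure B ℓ (ν.restrict A) ⊗ₘ ℓ) := by
  set ρ := occupationMeasure B ℓ (ν.restrict A)
  have hρ : ρ = ν.restrict A + (ℓ ∘ₘ ρ).restrict Bᶜ := occupationMeasure_eq_add_comp
  have hρν : ρ ≤ ν := h.occupationMeasure_le hA hB
  have : IsFiniteMeasure ρ := isFiniteMeasure_of_le ν hρν
  have hcomp : ℓ ∘ₘ ν = ℓ ∘ₘ ρ + (ν - ρ) := by
    conv_lhs => rw [← Measure.sub_add_cancel_of_le hρν]
    rw [Measure.comp_add, h.comp_sub_occupationMeasure hA hB, add_comm]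
  have hsplit : ν ⊗ₘ ℓ = ρ ⊗ₘ ℓ + (ν - ρ) ⊗ₘ ℓ := by
    rw [← Measure.compProd_add_left, add_comm, Measure.sub_add_cancel_of_le hρν]
  rw [isUnitFlow_compProd_iff hA hB] at h ⊢
  obtain ⟨hνA, hℓA, hℓB, hνB, -, χ, hχ, hχ0, hχanti⟩ := h
  have hρℓA : (ℓ ∘ₘ ρ) A = 0 := le_zero_iff.1 ((comp_le_comp_of_le ℓ hρν A).trans hℓA.le)
  refine ⟨?_, hρℓA, ?_, le_zero_iff.1 ((hρν B).trans hνB.le), fun C hC hCAB => ?_,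
    χ, hχ, le_zero_iff.1 ?_, hχanti⟩
  · rw [hρ, Measure.add_apply, Measure.restrict_apply hA, inter_self, Measure.restrict_apply hA,
      measure_mono_null inter_subset_left hρℓA, add_zero, hνA]
  · have hνρB : (ν - ρ) B = 0 := le_zero_iff.1 ((Measure.sub_le B).trans hνB.le)
    rwa [hcomp, Measure.add_apply, hνρB, add_zero] at hℓB
  · have hCA : C ∩ A = ∅ := by grind
    have hCB : C ∩ Bᶜ = C := by grind
    nth_rw 1 [hρ]
    rw [Measure.add_apply, Measure.restrict_apply hC, Measure.restrict_apply hC, hCA, hCB,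
      measure_empty, zero_add]
  · exact (Measure.le_add_right le_rfl χᶜ).trans_eq (by rw [← hsplit, hχ0])

end IsUnitFlow

end UnitFlow

theorem discrepancy_lemma_general
    {Ω : Type*} [MeasurableSpace Ω]
    (A B : Set Ω) (hA : MeasurableSet A) (hB : MeasurableSet B)
    (Φ : Measure (Ω × Ω)) (hΦ : IsUnitFlow A B Φ) (hfin : Φ univ < ⊤)
    (ℓ : Kernel Ω Ω) (hℓ : IsMarkovKernel ℓ) (hdis : Disintegrates Φ ℓ)
    (P : Measure (ℕ → Ω)) (hP : IsChainLaw (Φ.fst.restrict A) ℓ P)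
    (tΦ : Measure (Ω × Ω))
    (htΦ : ∀ g : Ω × Ω → ℝ≥0∞, Measurable g →
      ∫⁻ p, g p ∂tΦ = ∫⁻ ω, stoppedSum B g ω ∂P) :
    IsUnitFlow A B tΦ ∧
    ∃ Ψ : Measure (Ω × Ω), Φ = tΦ + Ψ ∧
      ∀ C : Set Ω, MeasurableSet C → Ψ (C ×ˢ univ) = Ψ (univ ×ˢ C) := by
  have : IsFiniteMeasure Φ := ⟨hfin⟩
  set ν := Φ.fst
  set ρ := occupationMeasure B ℓ (ν.restrict A)
  have hΦν : Φ = ν ⊗ₘ ℓ := hdis.eq_compProd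
  rw [hΦν] at hΦ
  have hρν : ρ ≤ ν := hΦ.occupationMeasure_le hA hB
  have : IsFiniteMeasure ρ := isFiniteMeasure_of_le ν hρν
  have htΦρ : tΦ = ρ ⊗ₘ ℓ := Measure.ext_of_lintegral _ fun g hg => by
    rw [htΦ g hg, lintegral_stoppedSum hB hP hg, Measure.lintegral_compProd hg]
  refine ⟨htΦρ ▸ hΦ.occupationMeasure_compProd hA hB, (ν - ρ) ⊗ₘ ℓ, ?_, fun C hC => ?_⟩
  · rw [hΦν, htΦρ, ← Measure.compProd_add_left, add_comm, Measure.sub_add_cancel_of_le hρν]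
  · rw [compProd_prod_univ hC, compProd_univ_prod hC, hΦ.comp_sub_occupationMeasure hA hB]

/-- **Discrepancy lemma.** -/
theorem discrepancy_lemma
    {Ω : Type*} [MeasurableSpace Ω] [TopologicalSpace Ω] [PolishSpace Ω] [BorelSpace Ω]
    (A B : Set Ω) (hA : MeasurableSet A) (hB : MeasurableSet B) (hAB : Disjoint A B)
    (Φ : Measure (Ω × Ω)) (hΦ : IsUnitFlow A B Φ) (hfin : Φ univ < ⊤)
    (ℓ : Kernel Ω Ω) (hℓ : IsMarkovKernel ℓ) (hdis : Disintegrates Φ ℓ)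
    (P : Measure (ℕ → Ω)) (hP : IsChainLaw (Φ.fst.restrict A) ℓ P)
    (tΦ : Measure (Ω × Ω))
    (htΦ : ∀ g : Ω × Ω → ℝ≥0∞, Measurable g →
      ∫⁻ p, g p ∂tΦ = ∫⁻ ω, stoppedSum B g ω ∂P) :
    IsUnitFlow A B tΦ ∧
    ∃ Ψ : Measure (Ω × Ω), Φ = tΦ + Ψ ∧
      ∀ C : Set Ω, MeasurableSet C → Ψ (C ×ˢ univ) = Ψ (univ ×ˢ C) :=
  discrepancy_lemma_general A B hA hB Φ hΦ hfin ℓ hℓ hdis P hP tΦ htΦ
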